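/- arXiv:1101.3029 — 4 statements merged into one kernel-verified Lean document; each statement's English description precedes it below -/
import Mathlib

section
/- Let p be an odd prime, s ≥ 1, k ≥ 1, and t = 2^k s. Let χ be a nontrivial multiplicative character of F_{p^t} whose restriction to the subfield F_{p^s} is also nontrivial. For each i = 1, …, k, let β_i ∈ F_{p^{2^{i−1}s}} be such that X² − β_i is irreducible over F_{p^{2^{i−1}s}}, and let α_i ∈ F_{p^{2^i s}} be a root of X² − β_i. Then G_t(1,χ) = G_s(1,χ) · Π_{i=1}^{k} χ(α_i) · A_{2^{i−1}s}(1/(2α_i)), where A_{2^{i−1}s}(γ) = Σ_{y ∈ F_{p^{2^{i−1}s}}} χ(y + γ), each Gauss sum being taken of the restriction of χ to the indicated subfield. -/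
open Finset

/-- `ζ_p = exp(2πi/p)`. -/
noncomputable def zetaC (p : ℕ) : ℂ := Complex.exp (2 * (Real.pi : ℂ) * Complex.I / (p : ℂ))

/-- The Gauss sum `G_n(1,χ) = Σ_{y ∈ F} χ(y) ζ_p^{Tr(y)}` of a function `χ : F → ℂ`
over a finite field `F` of characteristic `p`. -/
noncomputable def gaussSumF (p : ℕ) (F : Type) [Field F] [Fintype F] [Algebra (ZMod p) F]
    (χ : F → ℂ) : ℂ :=
  ∑ y : F, χ y * zetaC p ^ (Algebra.trace (ZMod p) F y).val

/-!
Let `L = M(α)` be a quadratic extension of finite fields of odd characteristic with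
`α² = β ∈ M`, and write `ψ = ζ_p ^ Tr_M`. Since `Tr_{L/M}(x + yα) = 2x`,
`G_L = Σ_x ψ(2x) Σ_y χ(x + yα)`. The substitution `y ↦ xy` factors the inner sum as
`χ(x) Σ_y χ(1 + yα)`; at `x = 0` both sides vanish because `χ` is nontrivial on `M`. Hence
`G_L = χ(1/2) G_M Σ_y χ(1 + yα) = G_M χ(α) Σ_y χ(y + 1/(2α))`, and the theorem follows by
climbing the tower one quadratic step at a time.
-/

open Polynomial Module

section QuadraticStep

variable {M L R : Type*} [Field M] [Field L] [Algebra M L] [CommSemiring R] {α : L} {β : M}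

theorem minpoly_eq_X_sq_sub_C (hα : α ^ 2 = algebraMap M L β)
    (hirr : Irreducible (X ^ 2 - C β)) : minpoly M α = X ^ 2 - C β :=
  (minpoly.eq_of_irreducible_of_monic hirr (by simp [hα]) (monic_X_pow_sub_C β two_ne_zero)).symm

theorem notMem_range_algebraMap_of_sq_eq (hα : α ^ 2 = algebraMap M L β)
    (hirr : Irreducible (X ^ 2 - C β)) : α ∉ Set.range (algebraMap M L) := by
  rintro ⟨m, rfl⟩
  have h := congrArg natDegree (minpoly_eq_X_sq_sub_C hα hirr)
  rw [minpoly.eq_X_sub_C, natDegree_X_sub_C, natDegree_X_pow_sub_C] at h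
  omega

theorem trace_eq_zero_of_sq_eq [FiniteDimensional M L] (hα : α ^ 2 = algebraMap M L β)
    (hirr : Irreducible (X ^ 2 - C β)) : Algebra.trace M L α = 0 := by
  have : (X ^ 2 - C β).nextCoeff = 0 := by
    rw [nextCoeff, natDegree_X_pow_sub_C]; simp
  rw [trace_eq_finrank_mul_minpoly_nextCoeff, minpoly_eq_X_sq_sub_C hα hirr, this,
    neg_zero, mul_zero]

theorem trace_algebraMap_add_mul_of_sq_eq (hrank : finrank M L = 2)
    (hα : α ^ 2 = algebraMap M L β) (hirr : Irreducible (X ^ 2 - C β)) (x y : M) :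
    Algebra.trace M L (algebraMap M L x + algebraMap M L y * α) = 2 * x := by
  have : FiniteDimensional M L := Module.finite_of_finrank_eq_succ hrank
  rw [map_add, ← Algebra.smul_def, map_smul, trace_eq_zero_of_sq_eq hα hirr,
    Algebra.trace_algebraMap, hrank, smul_zero, add_zero, two_nsmul, two_mul]

variable [Fintype M] (χ : MulChar L R)

theorem mulChar_algebraMap_inv_two_mul_sum (h2 : (2 : M) ≠ 0) (hα : α ≠ 0) :
    χ (algebraMap M L 2⁻¹) * ∑ y : M, χ (1 + algebraMap M L y * α) =
      χ α * ∑ y : M, χ (algebraMap M L y + (2 * α)⁻¹) := by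
  have h2L : (2 : L) ≠ 0 := by
    rw [← map_ofNat (algebraMap M L) 2]; exact (_root_.map_ne_zero _).2 h2
  rw [Finset.mul_sum, Finset.mul_sum]
  refine Fintype.sum_equiv (Equiv.mulLeft₀ _ (inv_ne_zero h2)) _ _ fun y => ?_
  rw [← map_mul, ← map_mul]
  congr 1
  simp only [Equiv.mulLeft₀_apply, map_mul, map_inv₀, map_ofNat]
  field_simp
  ring

section

variable (hχ : ∑ x : M, χ (algebraMap M L x) = 0)
include hχ

theorem sum_mulChar_algebraMap_add_mul (x : M) :
    ∑ y : M, χ (algebraMap M L x + algebraMap M L y * α) =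
      χ (algebraMap M L x) * ∑ y : M, χ (1 + algebraMap M L y * α) := by
  obtain rfl | hx := eq_or_ne x 0
  · simp [← Finset.sum_mul, hχ, MulChar.map_zero]
  rw [Finset.mul_sum]
  refine (Fintype.sum_equiv (Equiv.mulLeft₀ x hx) _ _ fun y => ?_).symm
  rw [← map_mul]
  congr 1
  simp only [Equiv.mulLeft₀_apply, map_mul]
  ring

theorem sum_mulChar_mul_apply_mul (ψ : M → R) (c : M) :
    ∑ x : M, χ (algebraMap M L x) * ψ (c * x) =
      χ (algebraMap M L c⁻¹) * ∑ x : M, χ (algebraMap M L x) * ψ x := by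
  obtain rfl | hc := eq_or_ne c 0
  -- `χ (0⁻¹) = χ 0 = 0`, matching the vanishing character sum on the left
  · simp [← Finset.sum_mul, hχ, MulChar.map_zero]
  rw [Finset.mul_sum]
  refine Fintype.sum_equiv (Equiv.mulLeft₀ c hc) _ _ fun x => ?_
  rw [Equiv.mulLeft₀_apply, ← mul_assoc, ← map_mul, ← map_mul, inv_mul_cancel_left₀ hc]

end

variable [Fintype L]

theorem bijective_algebraMap_add_mul (hrank : finrank M L = 2)
    (hα : α ∉ Set.range (algebraMap M L)) :
    Function.Bijective fun xy : M × M => algebraMap M L xy.1 + algebraMap M L xy.2 * α := by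
  refine (Fintype.bijective_iff_injective_and_card _).2 ⟨?_, ?_⟩
  · rintro ⟨x₁, y₁⟩ ⟨x₂, y₂⟩ h
    simp only at h
    obtain rfl | hy := eq_or_ne y₁ y₂
    · simpa using h
    refine absurd ⟨(x₂ - x₁) / (y₁ - y₂), ?_⟩ hα
    have : algebraMap M L y₁ - algebraMap M L y₂ ≠ 0 := by
      rw [← map_sub]; exact (_root_.map_ne_zero _).2 (sub_ne_zero.2 hy)
    rw [map_div₀, map_sub, map_sub, div_eq_iff this]
    linear_combination -h
  · rw [Fintype.card_prod, Module.card_eq_pow_finrank (K := M) (V := L), hrank, sq]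

theorem sum_eq_sum_sum_algebraMap_add_mul {N : Type*} [AddCommMonoid N]
    (hrank : finrank M L = 2) (hα : α ∉ Set.range (algebraMap M L)) (f : L → N) :
    ∑ z, f z = ∑ x : M, ∑ y : M, f (algebraMap M L x + algebraMap M L y * α) := by
  rw [← Fintype.sum_prod_type']
  exact (Fintype.sum_bijective _ (bijective_algebraMap_add_mul hrank hα) _ _ fun _ => rfl).symm

theorem sum_mulChar_mul_apply_trace (hχ : ∑ x : M, χ (algebraMap M L x) = 0) (ψ : M → R)
    (h2 : (2 : M) ≠ 0) (hrank : finrank M L = 2)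
    (hα : α ^ 2 = algebraMap M L β) (hirr : Irreducible (X ^ 2 - C β)) :
    ∑ z : L, χ z * ψ (Algebra.trace M L z) =
      (∑ x : M, χ (algebraMap M L x) * ψ x) *
        (χ α * ∑ y : M, χ (algebraMap M L y + (2 * α)⁻¹)) := by
  have hα_nmem := notMem_range_algebraMap_of_sq_eq hα hirr
  have hα0 : α ≠ 0 := fun h => hα_nmem ⟨0, by rw [h, map_zero]⟩
  calc ∑ z : L, χ z * ψ (Algebra.trace M L z)
      = ∑ x : M, ∑ y : M, χ (algebraMap M L x + algebraMap M L y * α) * ψ (2 * x) := by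
        simp only [sum_eq_sum_sum_algebraMap_add_mul hrank hα_nmem,
          trace_algebraMap_add_mul_of_sq_eq hrank hα hirr]
    _ = (∑ x : M, χ (algebraMap M L x) * ψ (2 * x)) * ∑ y : M, χ (1 + algebraMap M L y * α) := by
        rw [Finset.sum_mul]
        refine Finset.sum_congr rfl fun x _ => ?_
        rw [← Finset.sum_mul, sum_mulChar_algebraMap_add_mul χ hχ]
        ring
    _ = _ := by
        rw [sum_mulChar_mul_apply_mul χ hχ, ← mulChar_algebraMap_inv_two_mul_sum χ h2 hα0]
        ring

end QuadraticStep

theorem Fin.apply_last_eq_apply_zero_mul_prod {N : Type*} [CommMonoid N] :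
    ∀ {k : ℕ} (g : Fin (k + 1) → N) (c : Fin k → N),
      (∀ i : Fin k, g i.succ = g i.castSucc * c i) → g (Fin.last k) = g 0 * ∏ i, c i
  | 0, g, c, _ => by simp
  | k + 1, g, c, h => by
    have ih := Fin.apply_last_eq_apply_zero_mul_prod (fun i => g i.castSucc)
      (fun i => c i.castSucc) fun i => by simpa only [Fin.succ_castSucc] using h i.castSucc
    rw [← Fin.succ_last, h, Fin.prod_univ_castSucc, ← mul_assoc]
    exact congrArg (· * c (Fin.last k)) ih

theorem MulChar.domRestrict_subfield_apply {K R : Type*} [Field K] [CommMonoidWithZero R]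
    [Nontrivial R] (χ : MulChar K R) (T : Subfield K) (x : T) : χ.domRestrict T x = χ x := by
  rw [domRestrict_apply]
  split_ifs with hx
  · rfl
  · rw [isUnit_iff_ne_zero, not_not] at hx
    rw [hx, Subfield.coe_zero, MulChar.map_zero]

theorem MulChar.sum_subfield_eq_zero_of_ne_one {K R : Type*} [Field K] [CommRing R] [IsDomain R]
    (χ : MulChar K R) (T : Subfield K) [Fintype T] {y : K} (hyT : y ∈ T) (hy : y ≠ 0)
    (hχy : χ y ≠ 1) : ∑ x : T, χ x = 0 := by
  have hu : IsUnit (⟨y, hyT⟩ : T) := isUnit_iff_ne_zero.2 (ne_of_apply_ne Subtype.val hy)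
  have hne : χ.domRestrict T ≠ 1 := fun h => hχy <| by
    simpa only [domRestrict_subfield_apply, MulChar.one_apply hu] using congrArg (· ⟨y, hyT⟩) h
  simpa only [domRestrict_subfield_apply] using sum_eq_zero_of_ne_one hne

section GaussSum

variable {p : ℕ}

theorem gaussSumF_comp_ringEquiv {F F' : Type} [Field F] [Fintype F] [Algebra (ZMod p) F]
    [Field F'] [Fintype F'] [Algebra (ZMod p) F'] (e : F ≃+* F') (χ : F' → ℂ) :
    gaussSumF p F (χ ∘ e) = gaussSumF p F' χ := by
  let eA : F ≃ₐ[ZMod p] F' := AlgEquiv.ofRingEquiv (f := e) fun r =>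
    RingHom.congr_fun (RingHom.ext_zmod (e.toRingHom.comp (algebraMap (ZMod p) F)) _) r
  refine Fintype.sum_equiv eA.toEquiv _ _ fun y => ?_
  rw [← Algebra.trace_eq_of_algEquiv eA y]
  rfl

variable [Fact p.Prime]

theorem two_ne_zero_of_algebra_zmod (hp2 : p ≠ 2) (F : Type*) [Field F] [Algebra (ZMod p) F] :
    (2 : F) ≠ 0 := by
  have := charP_of_injective_algebraMap (algebraMap (ZMod p) F).injective p
  exact Ring.two_ne_zero (by rwa [ringChar.eq F p])

theorem gaussSumF_eq_sum_trace_trace {M L : Type} [Field M] [Field L] [Fintype M] [Fintype L]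
    [Algebra M L] [Algebra (ZMod p) M] [Algebra (ZMod p) L] (χ : L → ℂ) :
    gaussSumF p L χ =
      ∑ z, χ z * zetaC p ^ (Algebra.trace (ZMod p) M (Algebra.trace M L z)).val := by
  have : IsScalarTower (ZMod p) M L := IsScalarTower.of_algebraMap_eq' (RingHom.ext_zmod _ _)
  simp only [gaussSumF, Algebra.trace_trace]

theorem gaussSumF_eq_gaussSumF_mul_of_sq_eq {M L : Type} [Field M] [Field L] [Fintype M]
    [Fintype L] [Algebra M L] [Algebra (ZMod p) M] [Algebra (ZMod p) L] (hp2 : p ≠ 2)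
    (hcard : Fintype.card L = Fintype.card M ^ 2) (χ : MulChar L ℂ)
    (hχ : ∑ x : M, χ (algebraMap M L x) = 0) {α : L} {β : M} (hα : α ^ 2 = algebraMap M L β)
    (hirr : Irreducible (X ^ 2 - C β)) :
    gaussSumF p L χ = gaussSumF p M (fun x => χ (algebraMap M L x)) *
      (χ α * ∑ y : M, χ (algebraMap M L y + (2 * α)⁻¹)) := by
  have hrank : finrank M L = 2 := by
    rw [Module.card_eq_pow_finrank (K := M) (V := L)] at hcard
    exact Nat.pow_right_injective Fintype.one_lt_card hcard
  rw [gaussSumF_eq_sum_trace_trace (M := M)]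
  exact sum_mulChar_mul_apply_trace χ hχ (fun x => zetaC p ^ (Algebra.trace (ZMod p) M x).val)
    (two_ne_zero_of_algebra_zmod hp2 M) hrank hα hirr

theorem gaussSumF_subfield_eq_gaussSumF_mul_of_sq_eq {K : Type} [Field K] {M L : Subfield K}
    [Fintype M] [Fintype L] [Algebra (ZMod p) M] [Algebra (ZMod p) L] (hp2 : p ≠ 2)
    (hML : M ≤ L) (hcard : Fintype.card L = Fintype.card M ^ 2) (χ : MulChar K ℂ)
    (hχ : ∑ x : M, χ x = 0) {α : K} (hαL : α ∈ L) {β : M} (hα : α ^ 2 = β)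
    (hirr : Irreducible (X ^ 2 - C β)) :
    gaussSumF p L (fun y => χ y) =
      gaussSumF p M (fun y => χ y) * (χ α * ∑ y : M, χ ((y : K) + (2 * α)⁻¹)) := by
  let _ : Algebra M L := (Subfield.inclusion hML).toAlgebra
  have hcoe (x : M) : ((algebraMap M L x : L) : K) = x := rfl
  have h := gaussSumF_eq_gaussSumF_mul_of_sq_eq hp2 hcard (χ.domRestrict L)
    (by simpa only [MulChar.domRestrict_subfield_apply, hcoe] using hχ) (α := ⟨α, hαL⟩)
    (Subtype.ext hα) hirr
  have hfun : (fun y : L => χ y) = χ.domRestrict L :=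
    funext fun y => (χ.domRestrict_subfield_apply L y).symm
  rw [hfun, h]
  simp only [MulChar.domRestrict_subfield_apply, Subfield.coe_add, Subfield.coe_inv,
    Subfield.coe_mul, hcoe]
  rfl

end GaussSum

theorem stmt2_general (p s k : ℕ) (hp : p.Prime) (hodd : p ≠ 2)
    (K : Type) [Field K] [Fintype K] [Algebra (ZMod p) K]
    -- the tower `F_{p^s} = E 0 ⊆ E 1 ⊆ ⋯ ⊆ E k = F_{p^t}` of subfields of `K`
    (E : Fin (k + 1) → Subfield K)
    [∀ i, Fintype (E i)] [∀ i, Algebra (ZMod p) (E i)]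
    (hcardE : ∀ i : Fin (k + 1), Fintype.card (E i) = p ^ (2 ^ (i : ℕ) * s))
    (htop : E (Fin.last k) = ⊤)
    (hmono : ∀ i : Fin k, E i.castSucc ≤ E i.succ)
    (χ : MulChar K ℂ)
    (hres : ∃ y : E 0, y ≠ 0 ∧ χ (y : K) ≠ 1)
    (β : ∀ i : Fin k, E i.castSucc)
    (hirr : ∀ i : Fin k, Irreducible (Polynomial.X ^ 2 - Polynomial.C (β i)))
    (α : Fin k → K)
    (hαmem : ∀ i : Fin k, α i ∈ E i.succ)
    (hα : ∀ i : Fin k, (α i) ^ 2 = ((β i : E i.castSucc) : K)) :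
    gaussSumF p K (fun y => χ y) =
      gaussSumF p (E 0) (fun y => χ (y : K)) *
        ∏ i : Fin k, (χ (α i) * ∑ y : E i.castSucc, χ ((y : K) + (2 * α i)⁻¹)) := by
  have : Fact p.Prime := ⟨hp⟩
  obtain ⟨y, hy0, hχy⟩ := hres
  have hE0 (i : Fin (k + 1)) : E 0 ≤ E i := Fin.monotone_iff_le_succ.2 hmono (Fin.zero_le i)
  have hstep (i : Fin k) := gaussSumF_subfield_eq_gaussSumF_mul_of_sq_eq hodd (hmono i)
    (by rw [hcardE, hcardE, Fin.val_succ, Fin.val_castSucc, ← pow_mul]; ring) χ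
    (χ.sum_subfield_eq_zero_of_ne_one _ (hE0 _ y.2) (by exact_mod_cast hy0) hχy) (hαmem i)
    (hα i) (hirr i)
  rw [← gaussSumF_comp_ringEquiv ((RingEquiv.subfieldCongr htop).trans Subfield.topEquiv)]
  exact Fin.apply_last_eq_apply_zero_mul_prod (fun i => gaussSumF p (E i) fun y => χ y) _ hstep

theorem stmt2 (p s k : ℕ) (hp : p.Prime) (hodd : p ≠ 2) (hs : 1 ≤ s) (hk : 1 ≤ k)
    (K : Type) [Field K] [Fintype K] [Algebra (ZMod p) K]
    (hcardK : Fintype.card K = p ^ (2 ^ k * s))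
    -- the tower `F_{p^s} = E 0 ⊆ E 1 ⊆ ⋯ ⊆ E k = F_{p^t}` of subfields of `K`
    (E : Fin (k + 1) → Subfield K)
    [∀ i, Fintype (E i)] [∀ i, Algebra (ZMod p) (E i)]
    (hcardE : ∀ i : Fin (k + 1), Fintype.card (E i) = p ^ (2 ^ (i : ℕ) * s))
    (htop : E (Fin.last k) = ⊤)
    (hmono : ∀ i : Fin k, E i.castSucc ≤ E i.succ)
    (χ : MulChar K ℂ) (hnt : χ ≠ 1)
    (hres : ∃ y : E 0, y ≠ 0 ∧ χ (y : K) ≠ 1)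
    (β : ∀ i : Fin k, E i.castSucc)
    (hirr : ∀ i : Fin k, Irreducible (Polynomial.X ^ 2 - Polynomial.C (β i)))
    (α : Fin k → K)
    (hαmem : ∀ i : Fin k, α i ∈ E i.succ)
    (hα : ∀ i : Fin k, (α i) ^ 2 = ((β i : E i.castSucc) : K)) :
    gaussSumF p K (fun y => χ y) =
      gaussSumF p (E 0) (fun y => χ (y : K)) *
        ∏ i : Fin k, (χ (α i) * ∑ y : E i.castSucc, χ ((y : K) + (2 * α i)⁻¹)) :=
  stmt2_general p s k hp hodd K E hcardE htop hmono χ hres β hirr α hαmem hα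
end

section
/- Let p be a prime with p ≡ 5 (mod 6), let s ≥ 1 be even, and let χ be a nontrivial cubic multiplicative character of F_{p^{2s}}. Then G_{2s}(1,χ) = −p^s. -/
open Finset

/-!
Let `g(χ)` be the Gauss sum. Since `p ≡ 2 (mod 3)`, the Frobenius `y ↦ y ^ p`, which preserves the
trace, turns `χ` into `χ ^ p = χ²`, so `g(χ²) = g(χ)`. As `χ` has odd order, `χ(-1) = 1`, and the
classical identity `g(χ) g(χ²) = χ(-1) p^(2s)` gives `g(χ)² = p^(2s)`, i.e. `g(χ) = ±p^s`.
Summing `g(χ^j)` over `j = 0, 1, 2` gives `2 g(χ) - 1 = 3T`, with `T` a sum of `p`-th roots of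
unity, hence an algebraic integer. If `g(χ) = p^s`, then `(2p^s - 1)/3` would be a rational
algebraic integer, hence an integer; but `p^s ≡ 1 (mod 3)` because `s` is even.
-/

namespace MulChar

variable {R R' : Type*} [CommRing R] [CommRing R']

lemma apply_neg_one_eq_one_of_odd_orderOf {χ : MulChar R R'} (hχ : Odd (orderOf χ)) :
    χ (-1) = 1 := by
  obtain ⟨k, hk⟩ := hχ
  have hsq : χ (-1) ^ 2 = 1 := by rw [← map_pow, neg_one_sq, map_one]
  calc χ (-1) = χ (-1) ^ orderOf χ := by rw [hk, pow_succ, pow_mul, hsq, one_pow, one_mul]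
    _ = 1 := by
      rw [← pow_apply' χ (by omega), pow_orderOf_eq_one, one_apply isUnit_one.neg]

lemma sum_range_pow_apply [IsDomain R'] [DecidableEq R'] {χ : MulChar R R'} {n : ℕ}
    (hχ : χ ^ n = 1) (a : R) :
    ∑ j ∈ range n, (χ ^ j) a = if χ a = 1 then (n : R') else 0 := by
  by_cases ha : IsUnit a
  · obtain ⟨u, rfl⟩ := ha
    simp_rw [pow_apply_coe]
    split_ifs with h1
    · simp [h1]
    · have hn : χ u ^ n = 1 := by rw [← pow_apply_coe, hχ, one_apply_coe]
      have h := geom_sum_mul (χ u) n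
      rw [hn, sub_self] at h
      exact (mul_eq_zero.mp h).resolve_right (sub_ne_zero.mpr h1)
  · rw [if_neg (by rw [map_nonunit χ ha]; exact zero_ne_one)]
    exact sum_eq_zero fun j _ ↦ map_nonunit _ ha

end MulChar

lemma sum_gaussSum_pow_eq_mul_sum {R R' : Type*} [CommRing R] [Fintype R] [CommRing R']
    [IsDomain R'] [DecidableEq R'] {χ : MulChar R R'} {n : ℕ} (hχ : χ ^ n = 1)
    (ψ : AddChar R R') :
    ∑ j ∈ range n, gaussSum (χ ^ j) ψ = n * ∑ a with χ a = 1, ψ a := by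
  simp only [gaussSum]
  rw [sum_comm, mul_sum, sum_filter]
  refine sum_congr rfl fun a _ ↦ ?_
  rw [← sum_mul, MulChar.sum_range_pow_apply hχ, ite_mul, zero_mul]

section Frobenius

variable {p : ℕ} [Fact p.Prime] {K : Type*} [Field K] [Fintype K] [Algebra (ZMod p) K]

lemma Algebra.trace_pow_char (y : K) :
    Algebra.trace (ZMod p) K (y ^ p) = Algebra.trace (ZMod p) K y := by
  simpa [FiniteField.coe_frobeniusAlgEquivOfAlgebraic, ZMod.card] using
    Algebra.trace_eq_of_algEquiv (FiniteField.frobeniusAlgEquivOfAlgebraic (ZMod p) K) y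

lemma gaussSum_pow_char_of_map_pow_char {R' : Type*} [CommRing R'] (χ : MulChar K R')
    {ψ : AddChar K R'} (hψ : ∀ y, ψ (y ^ p) = ψ y) :
    gaussSum (χ ^ p) ψ = gaussSum χ ψ := by
  let σ := FiniteField.frobeniusAlgEquivOfAlgebraic (ZMod p) K
  have hσ (y : K) : σ y = y ^ p := by simp [σ, ZMod.card]
  refine Fintype.sum_equiv σ.toEquiv _ _ fun y ↦ ?_
  rw [AlgEquiv.toEquiv_eq_coe, AlgEquiv.coe_toEquiv, hσ, hψ,
    MulChar.pow_apply' χ (Fact.out : p.Prime).ne_zero, map_pow]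

end Frobenius

lemma AddChar.isIntegral_apply {A R' : Type*} [AddGroup A] [Finite A] [CommRing R']
    (ψ : AddChar A R') (a : A) : IsIntegral ℤ (ψ a) :=
  IsIntegral.of_pow Nat.card_pos <| by
    rw [← map_nsmul_eq_pow, card_nsmul_eq_zero', map_zero_eq_one]
    exact isIntegral_one

lemma dvd_of_isIntegral_of_mul_eq {K : Type*} [Field K] [CharZero K] {x : K}
    (hx : IsIntegral ℤ x) {n m : ℤ} (hn : n ≠ 0) (h : n * x = m) : n ∣ m := by
  have hxq : x = algebraMap ℚ K (m / n) := by
    rw [map_div₀, map_intCast, map_intCast, eq_div_iff (by exact_mod_cast hn), ← h, mul_comm]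
  rw [hxq, isIntegral_algebraMap_iff (algebraMap ℚ K).injective,
    IsIntegrallyClosed.isIntegral_iff] at hx
  obtain ⟨k, hk⟩ := hx
  refine ⟨k, ?_⟩
  rw [eq_intCast, eq_div_iff (by exact_mod_cast hn)] at hk
  exact_mod_cast hk.symm.trans (mul_comm _ _)

lemma not_three_dvd_two_mul_pow_sub_one {p s : ℕ} (hp : p % 3 = 2) (hs : Even s) :
    ¬ (3 : ℤ) ∣ 2 * (p : ℤ) ^ s - 1 := by
  have hp' : (p : ZMod 3) = -1 := by
    rw [← ZMod.natCast_mod, hp]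
    rfl
  rw [show (3 : ℤ) = (3 : ℕ) from rfl, ← ZMod.intCast_zmod_eq_zero_iff_dvd]
  push_cast
  rw [hp', hs.neg_one_pow]
  decide

lemma isPrimitiveRoot_zetaC (p : ℕ) [NeZero p] : IsPrimitiveRoot (zetaC p) p :=
  Complex.isPrimitiveRoot_exp p (NeZero.ne p)

noncomputable def traceAddChar (p : ℕ) [NeZero p] (K : Type) [Field K] [Algebra (ZMod p) K] :
    AddChar K ℂ :=
  (AddChar.zmodChar p (isPrimitiveRoot_zetaC p).pow_eq_one).compAddMonoidHom
    (Algebra.trace (ZMod p) K).toAddMonoidHom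

section traceAddChar

variable {p : ℕ} [Fact p.Prime] {K : Type} [Field K] [Fintype K] [Algebra (ZMod p) K]

lemma gaussSumF_eq_gaussSum (χ : MulChar K ℂ) :
    gaussSumF p K (fun y ↦ χ y) = gaussSum χ (traceAddChar p K) :=
  rfl

lemma traceAddChar_map_pow_char (y : K) : traceAddChar p K (y ^ p) = traceAddChar p K y := by
  simp only [traceAddChar, AddChar.compAddMonoidHom_apply, LinearMap.toAddMonoidHom_coe,
    Algebra.trace_pow_char]

variable (p K) in
lemma traceAddChar_ne_one : traceAddChar p K ≠ 1 := by
  obtain ⟨y, hy⟩ := Algebra.trace_surjective (ZMod p) K 1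
  refine AddChar.ne_one_iff.2 ⟨y, ?_⟩
  simp only [traceAddChar, AddChar.compAddMonoidHom_apply, LinearMap.toAddMonoidHom_coe, hy,
    AddChar.zmodChar_apply, ZMod.val_one, pow_one]
  exact (isPrimitiveRoot_zetaC p).ne_one (Fact.out : p.Prime).one_lt

end traceAddChar

theorem stmt9_general (p s : ℕ) (hp : p.Prime) (hp6 : p % 6 = 5) (heven : Even s)
    (K : Type) [Field K] [Fintype K] [Algebra (ZMod p) K]
    (hcard : Fintype.card K = p ^ (2 * s))
    (χ : MulChar K ℂ) (hnt : χ ≠ 1) (hord : orderOf χ = 3) :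
    gaussSumF p K (fun y => χ y) = -(p : ℂ) ^ s := by
  have : Fact p.Prime := ⟨hp⟩
  have hp3 : p % 3 = 2 := by omega
  rw [gaussSumF_eq_gaussSum]
  set ψ := traceAddChar p K
  set g := gaussSum χ ψ
  have hg2 : gaussSum (χ ^ 2) ψ = g := by
    rw [← hp3, ← hord, pow_mod_orderOf,
      gaussSum_pow_char_of_map_pow_char χ traceAddChar_map_pow_char]
  have hsq : g ^ 2 = ((p : ℂ) ^ s) ^ 2 := by
    have h := gaussSum_mul_gaussSum_pow_orderOf_sub_one hnt
      (AddChar.IsPrimitive.of_ne_one (traceAddChar_ne_one p K))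
    rw [hord, show 3 - 1 = 2 from rfl, hg2,
      χ.apply_neg_one_eq_one_of_odd_orderOf (by rw [hord]; decide), hcard] at h
    rw [sq, h]
    push_cast
    ring
  set T := ∑ a with χ a = 1, ψ a
  have hcong : 2 * g - 1 = 3 * T := by
    have h := sum_gaussSum_pow_eq_mul_sum (hord ▸ pow_orderOf_eq_one χ) ψ
    rw [sum_range_succ, sum_range_succ, sum_range_one, pow_zero, pow_one, hg2,
      gaussSum_one_left (traceAddChar_ne_one p K)] at h
    push_cast at h
    linear_combination h
  rcases sq_eq_sq_iff_eq_or_eq_neg.mp hsq with hg | hg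
  · refine absurd ?_ (not_three_dvd_two_mul_pow_sub_one hp3 heven)
    refine dvd_of_isIntegral_of_mul_eq (x := T) (IsIntegral.sum _ fun a _ ↦ ψ.isIntegral_apply a)
      three_ne_zero ?_
    push_cast
    linear_combination -hcong + 2 * hg
  · exact hg

theorem stmt9 (p s : ℕ) (hp : p.Prime) (hp6 : p % 6 = 5) (hs : 1 ≤ s) (heven : Even s)
    (K : Type) [Field K] [Fintype K] [Algebra (ZMod p) K]
    (hcard : Fintype.card K = p ^ (2 * s))
    (χ : MulChar K ℂ) (hnt : χ ≠ 1) (hord : orderOf χ = 3) :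
    gaussSumF p K (fun y => χ y) = -(p : ℂ) ^ s :=
  stmt9_general p s hp hp6 heven K hcard χ hnt hord
end

section
/- Let p ≡ 1 (mod 6) be a prime and let χ be a nontrivial cubic multiplicative character of F_{p²}. Let β ∈ F_p^* be an element that is a cube in F_p and a quadratic non-residue in F_p (so that X² − β is irreducible over F_p), and let α ∈ F_{p²} be a root of X² − β. Then G_2(1,χ) = G_1(1,χ) · A_1(1/(2α)), where A_1(γ) = Σ_{z ∈ F_p} χ(γ + z) for γ ∈ F_{p²}, and G_1(1,χ) is the Gauss sum over F_p of the restriction of χ to F_p. -/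
open Finset

/-- The Gauss sum `G_1(1,χ) = Σ_{y ∈ F_p} χ(y) ζ_p^y` over the prime field `F_p = ZMod p`. -/
noncomputable def gaussSumP (p : ℕ) [NeZero p] (χ : ZMod p → ℂ) : ℂ :=
  ∑ y : ZMod p, χ y * zetaC p ^ y.val

/-!
Write `y ∈ 𝔽_{p²}` as `u + vα` with `u, v ∈ 𝔽_p`; since `α² ∈ 𝔽_p`, `Tr α = 0` and `Tr y = 2u`.
For `u ≠ 0` the substitution `v = us` turns `Σ_v χ(u + vα)` into `χ(u) Σ_s χ(1 + sα)`; for `u = 0`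
the sum vanishes because `χ` stays nontrivial on `𝔽_p^*` (`χ(a)^{p+1} = χ(N a)` and `3 ∤ p + 1`).
Hence `G_2 = χ(1/2) G_1 Σ_s χ(1 + sα)`, and the same substitution at `u = 1/2` gives
`Σ_z χ(1/(2α) + z) = χ(α)⁻¹ χ(1/2) Σ_s χ(1 + sα)`, where `χ(α) = 1` because `α² = β` is a cube.
-/

namespace MulChar

variable {F K R : Type*} [Field F]

def comap [CommRing K] [Nontrivial K] [CommMonoidWithZero R] (f : F →+* K)
    (χ : MulChar K R) : MulChar F R where
  toFun x := χ (f x)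
  map_one' := by simp
  map_mul' x y := by simp
  map_nonunit' x hx := by rw [not_not.1 (mt isUnit_iff_ne_zero.2 hx), map_zero, χ.map_zero]

@[simp]
lemma comap_apply [CommRing K] [Nontrivial K] [CommMonoidWithZero R] (f : F →+* K)
    (χ : MulChar K R) (x : F) : χ.comap f x = χ (f x) :=
  rfl

theorem comap_algebraMap_ne_one [Field K] [Finite K] [Algebra F K] [CommRing R]
    {χ : MulChar K R} (hχ : χ ≠ 1)
    (hcop : (orderOf χ).Coprime ((Nat.card K - 1) / (Nat.card F - 1))) :
    χ.comap (algebraMap F K) ≠ 1 := by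
  have : Finite F := Finite.of_injective _ (algebraMap F K).injective
  intro h
  refine hχ (MulChar.ext fun a => ?_)
  have hnorm : χ a ^ ((Nat.card K - 1) / (Nat.card F - 1)) = 1 := by
    have hunit : IsUnit (Algebra.norm F (a : K)) :=
      isUnit_iff_ne_zero.2 (Algebra.norm_ne_zero_iff.2 a.ne_zero)
    rw [← map_pow, ← FiniteField.algebraMap_norm_eq_pow, ← comap_apply, h, one_apply hunit]
  have hord : χ a ^ orderOf χ = 1 := by
    rw [← pow_apply_coe, pow_orderOf_eq_one, one_apply_coe]
  simpa [hcop] using pow_gcd_eq_one.2 ⟨hord, hnorm⟩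

theorem comap_algebraMap_ne_one_of_card_eq_sq [Field K] [Finite K] [Algebra F K] [CommRing R]
    {χ : MulChar K R} (hχ : χ ≠ 1) (hcard : Nat.card K = Nat.card F ^ 2)
    (hcop : (orderOf χ).Coprime (Nat.card F + 1)) : χ.comap (algebraMap F K) ≠ 1 := by
  have : Finite F := Finite.of_injective _ (algebraMap F K).injective
  refine comap_algebraMap_ne_one hχ ?_
  rwa [hcard, Nat.div_eq_of_eq_mul_left (by have := Finite.one_lt_card (α := F); omega)
    (by simpa using Nat.sq_sub_sq (Nat.card F) 1)]

theorem apply_eq_one_of_sq_eq_cube {M : Type*} [CommMonoid M] [CommMonoidWithZero R]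
    {χ : MulChar M R} (hχ : χ ^ 3 = 1) {a b : M} (hb : IsUnit b) (h : a ^ 2 = b ^ 3) :
    χ a = 1 := by
  have ha : IsUnit a := (isUnit_pow_iff two_ne_zero).1 (h ▸ hb.pow 3)
  have hcube : ∀ {x : M}, IsUnit x → χ x ^ 3 = 1 := fun hx => by
    rw [← pow_apply' χ three_ne_zero, hχ, one_apply hx]
  have hsq : χ a ^ 2 = 1 := by rw [← map_pow, h, map_pow, hcube hb]
  calc χ a = χ a * χ a ^ 2 := by rw [hsq, mul_one]
    _ = χ a ^ 3 := (pow_succ' _ 2).symm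
    _ = 1 := hcube ha

theorem sum_mul_apply_mul_left [Fintype F] [CommSemiring R] (χ : MulChar F R) {c : F}
    (hc : c ≠ 0) (f : F → R) : ∑ u, χ u * f (c * u) = χ c⁻¹ * ∑ u, χ u * f u := by
  rw [mul_sum]
  exact Fintype.sum_bijective (c * ·) (mulLeft_bijective₀ c hc) _ _ fun u => by
    rw [← mul_assoc, ← map_mul, inv_mul_cancel_left₀ hc]

end MulChar

section QuadraticCoordinates

variable {F K : Type*} [Field F] [Field K] [Algebra F K] {α : K}

theorem trace_eq_zero_of_sq_eq_algebraMap [FiniteDimensional F K] {β : F}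
    (hα : α ^ 2 = algebraMap F K β) (hαF : α ∉ (algebraMap F K).range) :
    Algebra.trace F K α = 0 := by
  have hint : IsIntegral F α := .of_finite F α
  have hmin : minpoly F α = Polynomial.X ^ 2 - Polynomial.C β :=
    (Polynomial.eq_of_monic_of_dvd_of_natDegree_le (minpoly.monic hint)
      (Polynomial.monic_X_pow_sub_C β two_ne_zero) (minpoly.dvd F α (by simp [hα]))
      (by rw [Polynomial.natDegree_X_pow_sub_C]
          exact (minpoly.two_le_natDegree_iff hint).2 hαF)).symm
  rw [trace_eq_finrank_mul_minpoly_nextCoeff, hmin]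
  simp [Polynomial.nextCoeff]

theorem finrank_eq_of_card_eq_pow [Fintype F] [Fintype K] {n : ℕ}
    (hcard : Fintype.card K = Fintype.card F ^ n) : Module.finrank F K = n := by
  rw [Module.card_eq_pow_finrank (K := F) (V := K)] at hcard
  exact Nat.pow_right_injective Fintype.one_lt_card hcard

theorem trace_algebraMap_add_algebraMap_mul (h2 : Module.finrank F K = 2)
    (hα : Algebra.trace F K α = 0) (u v : F) :
    Algebra.trace F K (algebraMap F K u + algebraMap F K v * α) = 2 * u := by
  rw [map_add, Algebra.trace_algebraMap, h2, ← Algebra.smul_def, map_smul, hα, smul_zero,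
    add_zero, nsmul_eq_mul, Nat.cast_ofNat]

theorem bijective_algebraMap_add_algebraMap_mul [Fintype F] [Fintype K]
    (hcard : Fintype.card K = Fintype.card F ^ 2) (hαF : α ∉ (algebraMap F K).range) :
    Function.Bijective fun uv : F × F => algebraMap F K uv.1 + algebraMap F K uv.2 * α := by
  refine (Fintype.bijective_iff_injective_and_card _).2 ⟨?_, by rw [Fintype.card_prod, hcard, sq]⟩
  rintro ⟨u, v⟩ ⟨u', v'⟩ h
  obtain rfl : v = v' := by
    by_contra hv
    refine hαF ⟨(u - u') / (v' - v), ?_⟩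
    have : algebraMap F K (v' - v) ≠ 0 := by simpa [sub_eq_zero] using Ne.symm hv
    rw [map_div₀, div_eq_iff this, map_sub, map_sub]
    linear_combination h
  simpa using h

end QuadraticCoordinates

namespace MulChar

variable {F K R : Type*} [Field F] [Fintype F] [CommRing K] [Nontrivial K] [Algebra F K]
  [CommRing R] [IsDomain R] {χ : MulChar K R}

theorem sum_apply_algebraMap_add_algebraMap_mul (hχ : χ.comap (algebraMap F K) ≠ 1) (α : K)
    (u : F) : ∑ v : F, χ (algebraMap F K u + algebraMap F K v * α) =
      χ (algebraMap F K u) * ∑ s : F, χ (1 + algebraMap F K s * α) := by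
  rcases eq_or_ne u 0 with rfl | hu
  · have hsum : ∑ v : F, χ (algebraMap F K v) = 0 := sum_eq_zero_of_ne_one hχ
    simp only [map_zero, zero_add, χ.map_zero, zero_mul, map_mul, ← sum_mul, hsum]
  · rw [mul_sum]
    refine Fintype.sum_bijective (u⁻¹ * ·) (mulLeft_bijective₀ _ (inv_ne_zero hu)) _ _ fun v => ?_
    rw [← map_mul, mul_add, mul_one, ← mul_assoc, ← map_mul, mul_inv_cancel_left₀ hu]

theorem sum_prod_apply_algebraMap_add_algebraMap_mul (hχ : χ.comap (algebraMap F K) ≠ 1) (α : K)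
    (f : F → R) :
    ∑ uv : F × F, χ (algebraMap F K uv.1 + algebraMap F K uv.2 * α) * f uv.1 =
      (∑ u, χ.comap (algebraMap F K) u * f u) * ∑ s : F, χ (1 + algebraMap F K s * α) := by
  rw [Fintype.sum_prod_type, sum_mul]
  refine sum_congr rfl fun u _ => ?_
  dsimp only
  rw [← sum_mul, sum_apply_algebraMap_add_algebraMap_mul hχ, comap_apply, mul_right_comm]

end MulChar

theorem MulChar.sum_apply_inv_two_mul_add_algebraMap {F K R : Type*} [Field F] [Fintype F]
    [Field K] [Algebra F K] [CommRing R] [IsDomain R] {χ : MulChar K R}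
    (hχ : χ.comap (algebraMap F K) ≠ 1) (h2 : (2 : F) ≠ 0) {α : K} (hα : χ α = 1) :
    ∑ z : F, χ ((2 * α)⁻¹ + algebraMap F K z) =
      χ (algebraMap F K 2⁻¹) * ∑ s : F, χ (1 + algebraMap F K s * α) := by
  have hα0 : α ≠ 0 := by rintro rfl; simp at hα
  have h2K : (2 : K) ≠ 0 := by
    rw [← map_ofNat (algebraMap F K) 2]
    exact (map_ne_zero _).2 h2
  rw [← MulChar.sum_apply_algebraMap_add_algebraMap_mul hχ]
  refine sum_congr rfl fun z _ => ?_
  calc χ ((2 * α)⁻¹ + algebraMap F K z)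
      = χ (α * ((2 * α)⁻¹ + algebraMap F K z)) := by rw [map_mul, hα, one_mul]
    _ = χ (algebraMap F K 2⁻¹ + algebraMap F K z * α) := by
        rw [map_inv₀, map_ofNat]
        field_simp

theorem gaussSumF_eq_mul_sum_apply_one_add_mul (p : ℕ) [Fact p.Prime] (K : Type) [Field K]
    [Fintype K] [Algebra (ZMod p) K] (hcard : Fintype.card K = p ^ 2) (h2 : (2 : ZMod p) ≠ 0)
    {χ : MulChar K ℂ} (hχ : χ.comap (algebraMap (ZMod p) K) ≠ 1) {α : K} {β : ZMod p}
    (hα : α ^ 2 = algebraMap (ZMod p) K β) (hαF : α ∉ (algebraMap (ZMod p) K).range) :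
    gaussSumF p K (fun y => χ y) =
      gaussSumP p (fun y => χ (algebraMap (ZMod p) K y)) *
        (χ (algebraMap (ZMod p) K 2⁻¹) * ∑ s : ZMod p, χ (1 + algebraMap (ZMod p) K s * α)) := by
  rw [← ZMod.card p] at hcard
  have htr : ∀ u v : ZMod p, Algebra.trace (ZMod p) K
      (algebraMap (ZMod p) K u + algebraMap (ZMod p) K v * α) = 2 * u :=
    trace_algebraMap_add_algebraMap_mul (finrank_eq_of_card_eq_pow hcard)
      (trace_eq_zero_of_sq_eq_algebraMap hα hαF)
  calc gaussSumF p K (fun y => χ y)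
      = ∑ uv : ZMod p × ZMod p, χ (algebraMap (ZMod p) K uv.1 + algebraMap (ZMod p) K uv.2 * α) *
          zetaC p ^ (2 * uv.1).val :=
        (Fintype.sum_bijective _ (bijective_algebraMap_add_algebraMap_mul hcard hαF) _ _
          fun uv => by rw [htr]).symm
    _ = (∑ u, χ.comap (algebraMap (ZMod p) K) u * zetaC p ^ (2 * u).val) *
          ∑ s : ZMod p, χ (1 + algebraMap (ZMod p) K s * α) :=
        MulChar.sum_prod_apply_algebraMap_add_algebraMap_mul hχ α fun u => zetaC p ^ (2 * u).val
    _ = _ := by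
        rw [MulChar.sum_mul_apply_mul_left _ h2 fun w => zetaC p ^ w.val]
        simp only [gaussSumP, MulChar.comap_apply]
        ring

theorem stmt16_general (p : ℕ) [NeZero p] (hp : p.Prime) (hp6 : p % 6 = 1)
    (K : Type) [Field K] [Fintype K] [Algebra (ZMod p) K]
    (hcard : Fintype.card K = p ^ 2)
    (χ : MulChar K ℂ) (hord : orderOf χ = 3)
    (β : ZMod p)
    (hcube : ∃ c : ZMod p, c ^ 3 = β)
    (hnres : ¬ ∃ c : ZMod p, c ^ 2 = β)
    (α : K) (hα : α ^ 2 = algebraMap (ZMod p) K β) :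
    gaussSumF p K (fun y => χ y) =
      gaussSumP p (fun y => χ (algebraMap (ZMod p) K y)) *
        ∑ z : ZMod p, χ ((2 * α)⁻¹ + algebraMap (ZMod p) K z) := by
  have : Fact p.Prime := ⟨hp⟩
  have hαF : α ∉ (algebraMap (ZMod p) K).range := by
    rintro ⟨c, rfl⟩
    exact hnres ⟨c, (algebraMap (ZMod p) K).injective (by rw [map_pow, hα])⟩
  have h2 : (2 : ZMod p) ≠ 0 := Ring.two_ne_zero (by rw [ZMod.ringChar_zmod_n]; omega)
  have hχF : χ.comap (algebraMap (ZMod p) K) ≠ 1 := by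
    refine MulChar.comap_algebraMap_ne_one_of_card_eq_sq (by rintro rfl; simp at hord)
      (by rw [Nat.card_eq_fintype_card, hcard, Nat.card_zmod]) ?_
    rw [hord, Nat.card_zmod]
    exact (Nat.Prime.coprime_iff_not_dvd Nat.prime_three).2 (by omega)
  have hχα : χ α = 1 := by
    obtain ⟨c, rfl⟩ := hcube
    have hc : c ≠ 0 := by rintro rfl; exact hnres ⟨0, by ring⟩
    exact MulChar.apply_eq_one_of_sq_eq_cube (hord ▸ pow_orderOf_eq_one χ)
      (b := algebraMap (ZMod p) K c) (by simpa using hc) (by rw [hα, map_pow])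
  rw [gaussSumF_eq_mul_sum_apply_one_add_mul p K hcard h2 hχF hα hαF,
    MulChar.sum_apply_inv_two_mul_add_algebraMap hχF h2 hχα]

theorem stmt16 (p : ℕ) [NeZero p] (hp : p.Prime) (hp6 : p % 6 = 1)
    (K : Type) [Field K] [Fintype K] [Algebra (ZMod p) K]
    (hcard : Fintype.card K = p ^ 2)
    (χ : MulChar K ℂ) (hord : orderOf χ = 3)
    (β : ZMod p) (hβ0 : β ≠ 0)
    (hcube : ∃ c : ZMod p, c ^ 3 = β)
    (hnres : ¬ ∃ c : ZMod p, c ^ 2 = β)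
    (α : K) (hα : α ^ 2 = algebraMap (ZMod p) K β) :
    gaussSumF p K (fun y => χ y) =
      gaussSumP p (fun y => χ (algebraMap (ZMod p) K y)) *
        ∑ z : ZMod p, χ ((2 * α)⁻¹ + algebraMap (ZMod p) K z) :=
  stmt16_general p hp hp6 K hcard χ hord β hcube hnres α hα
end

section
/- Let p ≡ 1 (mod 6) be a prime and let χ be a nontrivial cubic multiplicative character of F_{p²}, and let χ' denote its restriction to the subfield F_p. Then G_2(1,χ) = − (conjugate(G_1(1,χ')))², where G_2(1,χ) is the Gauss sum of χ over F_{p²} and G_1(1,χ') is the Gauss sum of χ' over F_p. -/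
open Finset

/-!
Let `q = #F`. Write `K = F(h)` with `h² = g` for a nonsquare `g` of `F`, so that `h ^ q = -h`
and `x = a + b h` has trace `2a` and norm `x ^ (q + 1) = a² - g b²`. Since `q ≡ 1 (mod 3)`, a
cubic `χ` satisfies `χ x = χ (x ^ (q + 1))² = η (a² - g b²)` with `η = χ'² = conj χ'`, `χ'`
the restriction of `χ` to `F`. The substitution `u = a + s`, `v = a - s` turns
`G(η)² = Σ η(uv) ψ(u+v)` into `Σ η(a² - s²) ψ(2a)`. As every element of `F` is represented
exactly twice by `s²` or `g b²` together, adding the norm-form sum `Σ η(a² - g b²) ψ(2a)`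
gives `2 Σ_a ψ(2a) Σ_x η x = 0`, so `G_K(χ) = -G(η)² = -(conj G(χ'))²`.
-/

namespace MulChar

variable {R : Type*} [CommMonoidWithZero R]

@[simps]
def compRingHom {F K : Type*} [Field F] [CommRing K] [Nontrivial K] (χ : MulChar K R)
    (f : F →+* K) : MulChar F R where
  toFun x := χ (f x)
  map_one' := by simp
  map_mul' x y := by simp
  map_nonunit' x hx := by
    rw [isUnit_iff_ne_zero, not_not] at hx
    simp [hx]

theorem compRingHom_pow_eq_one {F K : Type*} [Field F] [CommRing K] [Nontrivial K]
    {χ : MulChar K R} {n : ℕ} (hχ : χ ^ n = 1) (f : F →+* K) : χ.compRingHom f ^ n = 1 := by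
  ext u
  rw [pow_apply_coe, one_apply_coe, compRingHom_apply]
  exact (pow_apply_coe χ n (Units.map (f : F →* K) u)).symm.trans (by rw [hχ, one_apply_coe])

theorem apply_pow_eq_self {M : Type*} [CommMonoid M] {χ : MulChar M R} {m n : ℕ}
    (hχ : χ ^ m = 1) (hn : n % m = 1) (x : M) : χ x ^ n = χ x := by
  rw [← pow_apply' χ (by rintro rfl; simp at hn), pow_eq_pow_mod n hχ, hn, pow_one]

theorem apply_eq_apply_mul_pow_sq {M : Type*} [CommMonoid M] {χ : MulChar M R} (hχ : χ ^ 3 = 1)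
    {q : ℕ} (hq : q % 3 = 1) (x : M) : χ x = χ (x * x ^ q) ^ 2 := by
  rw [map_mul, map_pow, ← pow_succ', ← pow_mul, apply_pow_eq_self hχ (by omega)]

end MulChar

namespace FiniteField

section OddCharacteristic

variable {F : Type*} [Field F] [Fintype F]

theorem card_sq_eq_add_card_mul_sq_eq [DecidableEq F] (hF : ringChar F ≠ 2) {g : F}
    (hg : ¬IsSquare g) (x : F) :
    #{s : F | s ^ 2 = x} + #{b : F | g * b ^ 2 = x} = 2 := by
  have hg0 : g ≠ 0 := by rintro rfl; exact hg ⟨0, by ring⟩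
  have hfilter : #{b : F | g * b ^ 2 = x} = #{b : F | b ^ 2 = g⁻¹ * x} := by
    congr 1
    exact filter_congr fun b _ => by rw [eq_inv_mul_iff_mul_eq₀ hg0]
  have hχg : quadraticChar F g⁻¹ = -1 :=
    quadraticChar_neg_one_iff_not_isSquare.mpr (by rwa [isSquare_inv])
  have hcard (a : F) : (#{s : F | s ^ 2 = a} : ℤ) = quadraticChar F a + 1 := by
    rw [← quadraticChar_card_sqrts hF a, Set.toFinset_ofPred]
  have : (#{s : F | s ^ 2 = x} : ℤ) + #{b : F | g * b ^ 2 = x} = 2 := by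
    rw [hfilter, hcard, hcard, map_mul, hχg]
    ring
  exact_mod_cast this

theorem sum_sq_add_sum_mul_sq {M : Type*} [AddCommMonoid M] (hF : ringChar F ≠ 2) {g : F}
    (hg : ¬IsSquare g) (f : F → M) :
    ∑ s, f (s ^ 2) + ∑ b, f (g * b ^ 2) = 2 • ∑ x, f x := by
  classical
  simp only [← sum_fiberwise' univ (· ^ 2) f, ← sum_fiberwise' univ (g * · ^ 2) f, sum_const,
    ← sum_add_distrib, ← add_smul, card_sq_eq_add_card_mul_sq_eq hF hg, smul_sum]

variable {R : Type*} [CommRing R]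

theorem gaussSum_sq_eq_sum_sq_sub_sq (hF : ringChar F ≠ 2) (χ : MulChar F R) (ψ : AddChar F R) :
    gaussSum χ ψ ^ 2 = ∑ a, ∑ s, χ (a ^ 2 - s ^ 2) * ψ (2 * a) := by
  have h2 : (2 : F) ≠ 0 := Ring.two_ne_zero hF
  have hbij : Function.Bijective fun as : F × F => (as.1 + as.2, as.1 - as.2) := by
    refine (Fintype.bijective_iff_injective_and_card _).mpr ⟨?_, rfl⟩
    rintro ⟨a, s⟩ ⟨a', s'⟩ h
    simp only [Prod.mk.injEq] at h ⊢
    constructor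
    · exact mul_left_cancel₀ h2 (by linear_combination h.1 + h.2)
    · exact mul_left_cancel₀ h2 (by linear_combination h.1 - h.2)
  rw [sq, gaussSum, sum_mul_sum, ← Fintype.sum_prod_type', ← Fintype.sum_prod_type',
    ← Fintype.sum_bijective _ hbij _ _ fun _ => rfl]
  refine sum_congr rfl fun ⟨a, s⟩ _ => ?_
  rw [mul_mul_mul_comm, ← map_mul, ← AddChar.map_add_eq_mul]
  congr 2 <;> ring

theorem sum_sq_sub_mul_sq_eq_neg_gaussSum_sq [IsDomain R] (hF : ringChar F ≠ 2) {g : F}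
    (hg : ¬IsSquare g) {χ : MulChar F R} (hχ : χ ≠ 1) (ψ : AddChar F R) :
    ∑ a, ∑ b, χ (a ^ 2 - g * b ^ 2) * ψ (2 * a) = -gaussSum χ ψ ^ 2 := by
  rw [eq_neg_iff_add_eq_zero, gaussSum_sq_eq_sum_sq_sub_sq hF, ← sum_add_distrib]
  refine sum_eq_zero fun a _ => ?_
  have htranslate : ∑ x, χ (a ^ 2 - x) = ∑ y, χ y :=
    Equiv.sum_comp (Equiv.subLeft (a ^ 2)) χ
  rw [← sum_mul, ← sum_mul, ← add_mul, add_comm,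
    sum_sq_add_sum_mul_sq hF hg fun x => χ (a ^ 2 - x), htranslate,
    MulChar.sum_eq_zero_of_ne_one hχ, smul_zero, zero_mul]

end OddCharacteristic

section QuadraticExtension

variable {F K : Type*} [Field F] [Field K] [Algebra F K] {g : F} {h : K}

theorem notMem_range_algebraMap_of_sq_eq (hg : ¬IsSquare g) (hh : h ^ 2 = algebraMap F K g) :
    h ∉ Set.range (algebraMap F K) := by
  rintro ⟨c, rfl⟩
  refine hg ⟨c, (algebraMap F K).injective ?_⟩
  rw [← hh, map_mul, sq]

variable [Fintype F]

theorem isSquare_algebraMap [Fintype K] (hF : ringChar F ≠ 2)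
    (hK : Fintype.card K = Fintype.card F ^ 2) (a : F) : IsSquare (algebraMap F K a) := by
  rcases eq_or_ne a 0 with rfl | ha
  · exact ⟨0, by simp⟩
  have hK2 : ringChar K ≠ 2 := Algebra.ringChar_eq F K ▸ hF
  rw [isSquare_iff hK2 ((map_ne_zero _).mpr ha)]
  obtain ⟨m, hm⟩ : Odd (Fintype.card F) := Nat.odd_iff.mpr (odd_card_of_char_ne_two hF)
  have hexp : Fintype.card K / 2 = 2 * m * (m + 1) := by
    rw [hK, hm, show (2 * m + 1) ^ 2 = 2 * (2 * m * (m + 1)) + 1 by ring,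
      Nat.mul_add_div two_pos]
    simp
  have ha1 : a ^ (2 * m) = 1 := by
    simpa [hm] using pow_card_sub_one_eq_one a ha
  rw [hexp, pow_mul, ← map_pow, ha1, map_one, one_pow]

theorem pow_card_eq_neg_of_sq_eq_algebraMap (hF : ringChar F ≠ 2) (hg : ¬IsSquare g)
    (hh : h ^ 2 = algebraMap F K g) : h ^ Fintype.card F = -h := by
  have hg0 : g ≠ 0 := by rintro rfl; exact hg ⟨0, by ring⟩
  have hgq : g ^ (Fintype.card F / 2) = -1 :=
    (pow_dichotomy hF hg0).resolve_left fun h1 => hg ((isSquare_iff hF hg0).mpr h1)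
  have hq : Fintype.card F = 2 * (Fintype.card F / 2) + 1 := by
    have := odd_card_of_char_ne_two hF
    omega
  rw [hq, pow_succ, pow_mul, hh, ← map_pow, hgq, map_neg, map_one, neg_one_mul]

theorem bijective_algebraMap_add_mul [Fintype K] (hK : Fintype.card K = Fintype.card F ^ 2)
    (hh : h ∉ Set.range (algebraMap F K)) :
    Function.Bijective fun ab : F × F => algebraMap F K ab.1 + algebraMap F K ab.2 * h := by
  refine (Fintype.bijective_iff_injective_and_card _).mpr ⟨?_, by simp [hK, sq]⟩
  rintro ⟨a, b⟩ ⟨a', b'⟩ hab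
  simp only at hab
  obtain rfl : b = b' := by
    by_contra hb
    have hb' : algebraMap F K (b' - b) ≠ 0 := by
      rw [map_ne_zero, sub_ne_zero]
      exact Ne.symm hb
    refine hh ⟨(a - a') / (b' - b), ?_⟩
    rw [map_div₀, div_eq_iff hb', map_sub, map_sub]
    linear_combination hab
  simpa using hab

variable (a b : F)

theorem algebraMap_add_mul_pow_card (hh : h ^ Fintype.card F = -h) :
    (algebraMap F K a + algebraMap F K b * h) ^ Fintype.card F =
      algebraMap F K a - algebraMap F K b * h := by
  have := map_add (frobeniusAlgHom F K) (algebraMap F K a) (algebraMap F K b * h)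
  simp only [coe_frobeniusAlgHom] at this
  rw [this, mul_pow, hh, ← map_pow, ← map_pow, pow_card, pow_card]
  ring

theorem trace_algebraMap_add_mul [Fintype K] (hK : Fintype.card K = Fintype.card F ^ 2)
    (hh : h ^ Fintype.card F = -h) :
    Algebra.trace F K (algebraMap F K a + algebraMap F K b * h) = 2 * a := by
  have hrank : Module.finrank F K = 2 :=
    Nat.pow_right_injective (Fintype.one_lt_card (α := F))
      ((Module.card_eq_pow_finrank (K := F) (V := K)).symm.trans hK)
  refine (algebraMap F K).injective ?_
  rw [algebraMap_trace_eq_sum_pow, hrank, sum_range_succ, sum_range_one, Nat.card_eq_fintype_card,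
    pow_zero, pow_one, pow_one, algebraMap_add_mul_pow_card a b hh, map_mul, map_ofNat]
  ring

theorem algebraMap_add_mul_mul_pow_card (hh : h ^ 2 = algebraMap F K g)
    (hh' : h ^ Fintype.card F = -h) :
    (algebraMap F K a + algebraMap F K b * h) *
        (algebraMap F K a + algebraMap F K b * h) ^ Fintype.card F =
      algebraMap F K (a ^ 2 - g * b ^ 2) := by
  rw [algebraMap_add_mul_pow_card a b hh', map_sub, map_mul, map_pow, map_pow, ← hh]
  ring

end QuadraticExtension

variable {F K R : Type*} [Field F] [Fintype F] [Field K] [Fintype K] [Algebra F K]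
  [CommRing R] [IsDomain R]

theorem gaussSum_trace_eq_neg_sq (hF : ringChar F ≠ 2) (hK : Fintype.card K = Fintype.card F ^ 2)
    (hq : Fintype.card F % 3 = 1) {χ : MulChar K R} (hχ : χ ^ 3 = 1) (hχ1 : χ ≠ 1)
    (ψ : AddChar F R) :
    gaussSum χ (ψ.compAddMonoidHom (Algebra.trace F K).toAddMonoidHom) =
      -gaussSum (χ.compRingHom (algebraMap F K) ^ 2) ψ ^ 2 := by
  obtain ⟨g, hg⟩ := exists_nonsquare hF
  obtain ⟨h, hh⟩ : ∃ h : K, h ^ 2 = algebraMap F K g := by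
    obtain ⟨h, hh⟩ := isSquare_algebraMap (K := K) hF hK g
    exact ⟨h, by rw [hh, sq]⟩
  have hh' := pow_card_eq_neg_of_sq_eq_algebraMap hF hg hh
  have hbij := bijective_algebraMap_add_mul hK (notMem_range_algebraMap_of_sq_eq hg hh)
  set η := χ.compRingHom (algebraMap F K) ^ 2 with hη_def
  have hχη (a b : F) : χ (algebraMap F K a + algebraMap F K b * h) = η (a ^ 2 - g * b ^ 2) := by
    rw [MulChar.apply_eq_apply_mul_pow_sq hχ hq, algebraMap_add_mul_mul_pow_card a b hh hh',
      hη_def, MulChar.pow_apply' _ two_ne_zero, MulChar.compRingHom_apply]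
  have hη : η ≠ 1 := by
    refine fun hη_one => hχ1 (MulChar.eq_one_iff.mpr fun u => ?_)
    obtain ⟨⟨a, b⟩, hab⟩ := hbij.surjective u
    simp only at hab
    have hN : a ^ 2 - g * b ^ 2 ≠ 0 := by
      rw [← map_ne_zero (algebraMap F K), ← algebraMap_add_mul_mul_pow_card a b hh hh', hab]
      simp
    rw [← hab, hχη, hη_one, MulChar.one_apply (isUnit_iff_ne_zero.mpr hN)]
  calc gaussSum χ (ψ.compAddMonoidHom (Algebra.trace F K).toAddMonoidHom)
      = ∑ ab : F × F, χ (algebraMap F K ab.1 + algebraMap F K ab.2 * h) *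
          ψ (Algebra.trace F K (algebraMap F K ab.1 + algebraMap F K ab.2 * h)) :=
        (Fintype.sum_bijective _ hbij _ _ fun _ => rfl).symm
    _ = ∑ a, ∑ b, η (a ^ 2 - g * b ^ 2) * ψ (2 * a) := by
        simp only [Fintype.sum_prod_type, hχη, trace_algebraMap_add_mul _ _ hK hh']
    _ = -gaussSum η ψ ^ 2 := sum_sq_sub_mul_sq_eq_neg_gaussSum_sq hF hg hη ψ

theorem star_gaussSum_eq_gaussSum_sq {χ : MulChar F ℂ} (hχ : χ ^ 3 = 1) (ψ : AddChar F ℂ) :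
    star (gaussSum χ ψ) = gaussSum (χ ^ 2) ψ := by
  have hinv : χ⁻¹ = χ ^ 2 := inv_eq_of_mul_eq_one_right (by rw [← pow_succ', hχ])
  have hneg : (χ ^ 2) (-1) = 1 := by
    rw [MulChar.pow_apply' _ two_ne_zero, ← map_pow, neg_one_sq, map_one]
  rw [star_gaussSum_eq, hinv, ← mul_gaussSum_inv_eq_gaussSum (χ ^ 2) ψ, hneg, one_mul]

end FiniteField

theorem stmt19 (p : ℕ) [NeZero p] (hp : p.Prime) (hp6 : p % 6 = 1)
    (K : Type) [Field K] [Fintype K] [Algebra (ZMod p) K]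
    (hcard : Fintype.card K = p ^ 2)
    (χ : MulChar K ℂ) (hord : orderOf χ = 3) :
    gaussSumF p K (fun y => χ y) =
      -((starRingEnd ℂ) (gaussSumP p (fun y => χ (algebraMap (ZMod p) K y)))) ^ 2 := by
  have : Fact p.Prime := ⟨hp⟩
  have hF : ringChar (ZMod p) ≠ 2 := by rw [ZMod.ringChar_zmod_n]; omega
  have hχ : χ ^ 3 = 1 := hord ▸ pow_orderOf_eq_one χ
  have hχ1 : χ ≠ 1 := by rintro rfl; simp at hord
  let ψ := AddChar.zmodChar p (Complex.isPrimitiveRoot_exp p (NeZero.ne p)).pow_eq_one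
  have hG2 : gaussSumF p K (fun y => χ y) =
      gaussSum χ (ψ.compAddMonoidHom (Algebra.trace (ZMod p) K).toAddMonoidHom) := rfl
  have hG1 : gaussSumP p (fun y => χ (algebraMap (ZMod p) K y)) =
      gaussSum (χ.compRingHom (algebraMap (ZMod p) K)) ψ := rfl
  rw [hG2, hG1, starRingEnd_apply, FiniteField.star_gaussSum_eq_gaussSum_sq
      (MulChar.compRingHom_pow_eq_one hχ _),
    FiniteField.gaussSum_trace_eq_neg_sq hF (by rw [ZMod.card, hcard]) (by rw [ZMod.card]; omega)
      hχ hχ1]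
end
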